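/- arXiv:2604.05607 — 3 statements merged into one kernel-verified Lean document; each statement's English description precedes it below -/
import Mathlib

section
/- Fix an integer s ≥ 2. Then limsup_{n→∞} α_s(H_2(n)) / (2^n/n) = s − 1; that is, the limit superior of the real sequence n ↦ n · α_s(H_2(n)) / 2^n equals s − 1. -/
open Finset

/-- The `r`-distance graph on the Boolean cube `{0,1}^n`: two vertices are adjacent
iff their Hamming distance equals `r`. -/
def cubeGraph (n r : ℕ) : SimpleGraph (Fin n → Bool) where
  Adj x y := x ≠ y ∧ hammingDist x y = r
  symm := ⟨by
    rintro x y ⟨hne, hd⟩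
    exact ⟨hne.symm, by rwa [hammingDist_comm]⟩⟩
  loopless := ⟨by rintro x ⟨hne, -⟩; exact hne rfl⟩

/-- `S` is `K_s`-free in `G`: it contains no `s` pairwise adjacent vertices. -/
def IsKFree {V : Type*} (G : SimpleGraph V) (s : ℕ) (S : Finset V) : Prop :=
  ¬ ∃ T : Finset V, T ⊆ S ∧ T.card = s ∧ ∀ x ∈ T, ∀ y ∈ T, x ≠ y → G.Adj x y

/-- The `s`-independence number: the maximum size of a `K_s`-free vertex subset. -/
noncomputable def alphaS {V : Type*} [Fintype V] (G : SimpleGraph V) (s : ℕ) : ℕ :=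
  sSup {m | ∃ S : Finset V, IsKFree G s S ∧ S.card = m}

/-- The Hamming weight (number of `true` coordinates) of a vertex of the cube. -/
def wt {n : ℕ} (x : Fin n → Bool) : ℕ := (univ.filter fun i => x i = true).card

/-- The subgraph of `cubeGraph n r` induced on the `k`-th layer. -/
def layerGraph (n r k : ℕ) : SimpleGraph {x : Fin n → Bool // wt x = k} :=
  SimpleGraph.induce {x : Fin n → Bool | wt x = k} (cubeGraph n r)

/-!
Upper bound: the neighbours `e i + y` of a vertex `y` in the distance-one cube are pairwise at
distance two, hence form a clique of `H₂(n)`. A `K_s`-free set `S` contains at most `s - 1` of them,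
and double counting the pairs `(i, y)` with `e i + y ∈ S` gives `|S| * n ≤ (s - 1) * 2 ^ n`.

Lower bound, for `n = 2 ^ m`: label the coordinates bijectively by `𝔽₂ᵐ` and colour a vertex `x`
by its syndrome `∑ i, x i • v i`. Vertices at distance two get different colours (the Hamming code
has minimum distance three), so any `s - 1` colour classes form a `K_s`-free set, and averaging over
translates of the colouring yields one of size at least `(s - 1) * 2 ^ n / n`.
-/

section KFree

variable {V : Type*} [Fintype V] {G : SimpleGraph V} {s : ℕ}

lemma bddAbove_card_isKFree (G : SimpleGraph V) (s : ℕ) :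
    BddAbove {m | ∃ S : Finset V, IsKFree G s S ∧ S.card = m} :=
  ⟨Fintype.card V, by rintro _ ⟨S, -, rfl⟩; exact card_le_univ S⟩

lemma IsKFree.card_le_alphaS {S : Finset V} (hS : IsKFree G s S) : S.card ≤ alphaS G s :=
  le_csSup (bddAbove_card_isKFree G s) ⟨S, hS, rfl⟩

lemma alphaS_le {m : ℕ} (h : ∀ S : Finset V, IsKFree G s S → S.card ≤ m) : alphaS G s ≤ m :=
  csSup_le' <| by rintro _ ⟨S, hS, rfl⟩; exact h S hS

end KFree

lemma card_filter_add_left_mem {W : Type*} [AddGroup W] [Fintype W] [DecidableEq W] (a : W)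
    (A : Finset W) : #{c | a + c ∈ A} = #A :=
  card_nbij' (a + ·) (-a + ·) (fun _ hc => by simpa using hc) (fun _ hc => by simpa using hc)
    (fun _ _ => by simp) (fun _ _ => by simp)

namespace SimpleGraph.Coloring

variable {V W : Type*} {G : SimpleGraph V} [Fintype V] [DecidableEq W]

lemma isKFree_preimage {s : ℕ} (C : G.Coloring W) {A : Finset W} (hA : #A < s) :
    IsKFree G s {x | C x ∈ A} := by
  rintro ⟨T, hTS, rfl, hT⟩
  refine hA.not_ge (card_le_card_of_injOn C (fun x hx => (mem_filter.mp (hTS hx)).2) ?_)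
  intro x hx y hy hxy
  by_contra hne
  exact C.valid (hT x hx y hy hne) hxy

/-- Averaging over the translates `C · + c`: some `k` colour classes of a colouring by a finite
group cover at least a `k / |W|` fraction of the vertices. -/
lemma mul_card_le_card_mul_alphaS [AddGroup W] [Fintype W] (C : G.Coloring W) {k : ℕ}
    (hk : k ≤ Fintype.card W) :
    k * Fintype.card V ≤ Fintype.card W * alphaS G (k + 1) := by
  obtain ⟨A, -, rfl⟩ := exists_subset_card_eq (s := (univ : Finset W)) (by simpa using hk)
  have hsum : ∑ c : W, #{x | C x + c ∈ A} = Fintype.card V * #A := by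
    simp only [card_filter (fun x => C x + _ ∈ A)]
    rw [sum_comm]
    simp [card_filter_add_left_mem]
  obtain ⟨c, -, hc⟩ := exists_le_of_sum_le (f := fun _ => #A * Fintype.card V)
    (g := fun c => Fintype.card W * #{x | C x + c ∈ A}) univ_nonempty
    (by rw [sum_const, card_univ, smul_eq_mul, ← mul_sum, hsum, mul_comm #A])
  let Cc : G.Coloring W := Coloring.mk (C · + c) fun h => by simpa using C.valid h
  exact hc.trans (Nat.mul_le_mul_left _ (Cc.isKFree_preimage (Nat.lt_succ_self _)).card_le_alphaS)

end SimpleGraph.Coloring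

section UpperBound

variable {n s : ℕ}

lemma hammingDist_basisFun_add_basisFun_add {i j : Fin n} (hij : i ≠ j) (y : Fin n → Bool) :
    hammingDist (Pi.basisFun Bool (Fin n) i + y) (Pi.basisFun Bool (Fin n) j + y) = 2 := by
  rw [hammingDist_eq_hammingNorm, show -(Pi.basisFun Bool (Fin n) i + y) +
    (Pi.basisFun Bool (Fin n) j + y) = -Pi.basisFun Bool (Fin n) i + Pi.basisFun Bool (Fin n) j
    by abel, hammingNorm, ← card_pair hij]
  congr 1
  ext k
  by_cases hki : k = i <;> by_cases hkj : k = j <;> simp_all [Pi.single_apply]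

lemma IsKFree.card_filter_basisFun_add_mem_le {S : Finset (Fin n → Bool)}
    (hS : IsKFree (cubeGraph n 2) s S) (y : Fin n → Bool) :
    #{i | Pi.basisFun Bool (Fin n) i + y ∈ S} ≤ s - 1 := by
  by_contra! hlt
  obtain ⟨T, hT, hTcard⟩ := exists_subset_card_eq
    (show s ≤ #{i | Pi.basisFun Bool (Fin n) i + y ∈ S} by omega)
  have hinj : Function.Injective fun i => Pi.basisFun Bool (Fin n) i + y :=
    fun i j h => by simpa [Pi.single_apply, eq_comm] using congrFun (add_right_cancel h) i
  refine hS ⟨T.image (Pi.basisFun Bool (Fin n) · + y), ?_,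
    by rw [card_image_of_injective _ hinj, hTcard], ?_⟩
  · intro x hx
    obtain ⟨i, hi, rfl⟩ := mem_image.mp hx
    exact (mem_filter.mp (hT hi)).2
  · simp only [mem_image]
    rintro _ ⟨i, -, rfl⟩ _ ⟨j, -, rfl⟩ hne
    exact ⟨hne, hammingDist_basisFun_add_basisFun_add (fun h => hne (by rw [h])) y⟩

lemma IsKFree.card_mul_le_sub_one_mul_two_pow {S : Finset (Fin n → Bool)}
    (hS : IsKFree (cubeGraph n 2) s S) : #S * n ≤ (s - 1) * 2 ^ n :=
  calc #S * n = ∑ i : Fin n, #{y | Pi.basisFun Bool (Fin n) i + y ∈ S} := by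
        rw [sum_congr rfl fun i _ => card_filter_add_left_mem (Pi.basisFun Bool (Fin n) i) S]
        simp [mul_comm]
    _ = ∑ y : Fin n → Bool, #{i | Pi.basisFun Bool (Fin n) i + y ∈ S} := by
        simp only [card_filter]; exact sum_comm
    _ ≤ ∑ _y : Fin n → Bool, (s - 1) :=
        sum_le_sum fun y _ => hS.card_filter_basisFun_add_mem_le y
    _ = (s - 1) * 2 ^ n := by simp [mul_comm]

lemma alphaS_cubeGraph_two_mul_le (n s : ℕ) :
    alphaS (cubeGraph n 2) s * n ≤ (s - 1) * 2 ^ n := by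
  rcases Nat.eq_zero_or_pos n with rfl | hn
  · simp
  have : alphaS (cubeGraph n 2) s ≤ (s - 1) * 2 ^ n / n :=
    alphaS_le fun _ hS => (Nat.le_div_iff_mul_le hn).2 hS.card_mul_le_sub_one_mul_two_pow
  exact (Nat.mul_le_mul_right n this).trans (Nat.div_mul_le_self _ n)

end UpperBound

section LowerBound

variable {n : ℕ} {W : Type*} [AddCommGroup W] [Module Bool W]

/-- Over `Bool` we have `v i + v j = v i - v j`, which is nonzero for `i ≠ j`. -/
lemma linearCombination_ne_of_hammingDist_eq_two {v : Fin n → W} (hv : Function.Injective v)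
    {x y : Fin n → Bool} (h : hammingDist x y = 2) :
    Fintype.linearCombination Bool v x ≠ Fintype.linearCombination Bool v y := by
  rw [Ne, ← sub_eq_zero, ← map_sub, Fintype.linearCombination_apply]
  rw [hammingDist_comm, hammingDist_eq_hammingNorm, neg_add_eq_sub, hammingNorm] at h
  obtain ⟨i, j, hij, hsupp⟩ := card_eq_two.mp h
  have hone : ∀ k ∈ ({i, j} : Finset (Fin n)), (x - y) k = 1 := by
    intro k hk
    rw [← hsupp, mem_filter] at hk
    exact (Bool.eq_false_or_eq_true _).resolve_right hk.2
  rw [← sum_filter_of_ne (p := fun k => (x - y) k ≠ 0) (fun k _ hk h0 => hk (by rw [h0, zero_smul])), hsupp,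
    sum_pair hij, hone i (by simp), hone j (by simp), one_smul, one_smul]
  intro hsum
  have hneg : -v j = v j := (neg_one_smul Bool (v j)).symm.trans (one_smul Bool (v j))
  exact hij (hv (by rw [← hneg, ← sub_eq_zero, sub_neg_eq_add, hsum]))

def syndromeColoring {v : Fin n → W} (hv : Function.Injective v) :
    (cubeGraph n 2).Coloring W :=
  SimpleGraph.Coloring.mk (Fintype.linearCombination Bool v) fun h =>
    linearCombination_ne_of_hammingDist_eq_two hv h.2

lemma sub_one_mul_two_pow_two_pow_le_alphaS_cubeGraph {m s : ℕ} (hs : 1 ≤ s)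
    (hsm : s - 1 ≤ 2 ^ m) :
    (s - 1) * 2 ^ 2 ^ m ≤ 2 ^ m * alphaS (cubeGraph (2 ^ m) 2) s := by
  let v : Fin (2 ^ m) ≃ (Fin m → Bool) := (Fintype.equivFinOfCardEq (by simp)).symm
  have := (syndromeColoring v.injective).mul_card_le_card_mul_alphaS (k := s - 1)
    (by simpa using hsm)
  simpa [Nat.sub_add_cancel hs] using this

end LowerBound

theorem Filter.limsup_eq_of_eventually_le_of_frequently_ge {α β : Type*}
    [ConditionallyCompleteLinearOrder β] {f : Filter α} {u : α → β} {c : β}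
    (hle : ∀ᶠ a in f, u a ≤ c) (hge : ∃ᶠ a in f, c ≤ u a) : limsup u f = c :=
  le_antisymm (limsup_le_of_le (.of_frequently_ge hge) hle)
    (le_limsup_of_frequently_le hge (isBoundedUnder_of_eventually_le hle))

/-- **Theorem.** For fixed `s ≥ 2`,
`limsup_{n→∞} α_s(H_2(n)) / (2^n/n) = s − 1`. -/
theorem stmt1 (s : ℕ) (hs : 2 ≤ s) :
    Filter.limsup
      (fun n : ℕ => (n : ℝ) * (alphaS (cubeGraph n 2) s : ℝ) / 2 ^ n)
      Filter.atTop = (s : ℝ) - 1 := by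
  have hs1 : ((s - 1 : ℕ) : ℝ) = s - 1 := by rw [Nat.cast_sub (by omega), Nat.cast_one]
  refine Filter.limsup_eq_of_eventually_le_of_frequently_ge (.of_forall fun n => ?_) ?_
  · rw [div_le_iff₀ (by positivity), ← hs1, mul_comm]
    exact_mod_cast alphaS_cubeGraph_two_mul_le n s
  · refine (tendsto_pow_atTop_atTop_of_one_lt one_lt_two).frequently
      (Filter.Eventually.frequently ((Filter.eventually_ge_atTop s).mono fun m hm => ?_))
    have hsm : s - 1 ≤ 2 ^ m := by have := Nat.lt_two_pow_self (n := m); omega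
    rw [le_div_iff₀ (by positivity), ← hs1]
    exact_mod_cast sub_one_mul_two_pow_two_pow_le_alphaS_cubeGraph (by omega) hsm
end

section
/- BCH-type minimum weight bound: let F be a field of characteristic 2, let t ≥ 1 be an integer, and let T be a nonempty finite set of nonzero elements of F such that ∑_{γ ∈ T} γ^{2ℓ−1} = 0 for every ℓ ∈ {1, …, t}. Then |T| ≥ 2t + 1. -/
open Finset

/-- **BCH-type minimum weight bound.** Let `F` be a field of characteristic 2 and
`T` a nonempty finite set of nonzero elements of `F` with
`∑_{γ ∈ T} γ^{2ℓ−1} = 0` for every `ℓ ∈ {1, …, t}`. Then `|T| ≥ 2t + 1`. -/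
theorem stmt15 {F : Type*} [Field F] (hchar : ringChar F = 2) (t : ℕ) (ht : 1 ≤ t)
    (T : Finset F) (hTne : T.Nonempty) (hT0 : (0 : F) ∉ T)
    (hsum : ∀ ℓ : ℕ, 1 ≤ ℓ → ℓ ≤ t → ∑ γ ∈ T, γ ^ (2 * ℓ - 1) = 0) :
    2 * t + 1 ≤ T.card := by
  by_contra hcon
  push_neg at hcon
  have hcard : T.card ≤ 2 * t := by omega
  haveI : CharP F 2 := hchar ▸ ringChar.charP F
  haveI : Fact (Nat.Prime 2) := ⟨Nat.prime_two⟩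
  -- all power sums p_k, 1 ≤ k ≤ 2t, vanish
  have hp : ∀ k, 1 ≤ k → k ≤ 2 * t → ∑ γ ∈ T, γ ^ k = 0 := by
    intro k
    induction k using Nat.strong_induction_on with
    | _ k ih =>
      intro hk1 hk2
      rcases Nat.even_or_odd k with he | ho
      · obtain ⟨m, hm⟩ := he
        have hm1 : 1 ≤ m := by omega
        have hml : m < k := by omega
        have h2 : ∑ γ ∈ T, γ ^ k = (∑ γ ∈ T, γ ^ m) ^ 2 := by
          rw [sum_pow_char]
          refine Finset.sum_congr rfl fun γ _ => ?_
          rw [← pow_mul]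
          congr 1
          omega
        rw [h2, ih m hml hm1 (by omega), zero_pow (by norm_num)]
      · obtain ⟨m, hm⟩ := ho
        have hk : k = 2 * (m + 1) - 1 := by omega
        rw [hk]
        exact hsum (m + 1) (by omega) (by omega)
  -- set up Vandermonde contradiction
  set n := T.card with hn
  have hn1 : 1 ≤ n := Finset.card_pos.mpr hTne
  let e : Fin n ≃ T := (T.equivFin).symm
  let v : Fin n → F := fun i => (e i : F)
  have hvinj : Function.Injective v := fun i j h => e.injective (Subtype.ext h)
  have hvne : ∀ i, v i ≠ 0 := fun i h => hT0 (h ▸ (e i).2)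
  let A : Matrix (Fin n) (Fin n) F := Matrix.of fun i j => v i ^ ((j : ℕ) + 1)
  have hdet : A.det ≠ 0 := by
    have hA : A = Matrix.of fun i j => v i * (Matrix.vandermonde v) i j := by
      ext i j
      simp [A, Matrix.vandermonde, pow_succ, mul_comm]
    rw [hA, Matrix.det_mul_column, Matrix.det_vandermonde]
    refine mul_ne_zero (Finset.prod_ne_zero_iff.mpr fun i _ => hvne i) ?_
    refine Finset.prod_ne_zero_iff.mpr fun i _ => Finset.prod_ne_zero_iff.mpr fun j hj => ?_
    exact sub_ne_zero.mpr fun h => (Finset.mem_Ioi.mp hj).ne' (hvinj h)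
  have hker : Matrix.vecMul (fun _ : Fin n => (1 : F)) A = 0 := by
    funext j
    have hsumT : ∑ i : Fin n, v i ^ ((j : ℕ) + 1) = ∑ γ ∈ T, γ ^ ((j : ℕ) + 1) := by
      rw [← Finset.sum_coe_sort T (fun γ => γ ^ ((j : ℕ) + 1))]
      exact Equiv.sum_comp e (fun x : T => (x : F) ^ ((j : ℕ) + 1))
    have hjle : (j : ℕ) + 1 ≤ 2 * t := by
      have := j.2
      omega
    simp only [Matrix.vecMul, dotProduct, one_mul, Pi.zero_apply]
    calc ∑ i : Fin n, A i j = ∑ γ ∈ T, γ ^ ((j : ℕ) + 1) := hsumT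
      _ = 0 := hp _ (by omega) hjle
  have h1 : (fun _ : Fin n => (1 : F)) = 0 := Matrix.eq_zero_of_vecMul_eq_zero hdet hker
  have : (1 : F) = 0 := congrFun h1 ⟨0, by omega⟩
  exact one_ne_zero this
end

section
/- Vandermonde power-sum lemma: let F be a field and let T be a nonempty finite set of nonzero elements of F, with |T| = w. Then there exists an integer ℓ with 1 ≤ ℓ ≤ w such that ∑_{γ ∈ T} γ^ℓ ≠ 0. -/
open Finset

/-- **Vandermonde power-sum lemma.** Let `F` be a field and `T` a nonempty finite
set of nonzero elements of `F`, with `|T| = w`. Then some power sum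
`∑_{γ ∈ T} γ^ℓ` with `1 ≤ ℓ ≤ w` is nonzero. -/
theorem stmt16 {F : Type*} [Field F] (T : Finset F) (hTne : T.Nonempty)
    (hT0 : (0 : F) ∉ T) (w : ℕ) (hw : T.card = w) :
    ∃ ℓ : ℕ, 1 ≤ ℓ ∧ ℓ ≤ w ∧ ∑ γ ∈ T, γ ^ ℓ ≠ 0 := by
  by_contra h
  push_neg at h
  -- enumerate T
  have e : Fin w ≃ {x // x ∈ T} := (hw ▸ T.equivFin).symm
  set v : Fin w → F := fun i => (e i : F) with hv
  have hvinj : Function.Injective v := fun i j hij => by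
    apply e.injective; exact Subtype.ext hij
  have hvne : ∀ i, v i ≠ 0 := fun i hi => hT0 (hi ▸ (e i).2)
  -- the matrix C i j = v j ^ (i+1)
  set C : Matrix (Fin w) (Fin w) F := Matrix.of fun i j => v j ^ (i.1 + 1) with hC
  have hdet : C.det ≠ 0 := by
    have hC' : C = Matrix.of fun i j => v j * (Matrix.vandermonde v).transpose i j := by
      ext i j
      simp [hC, Matrix.vandermonde, Matrix.transpose, pow_succ, mul_comm]
    rw [hC', Matrix.det_mul_row, Matrix.det_transpose, Matrix.det_vandermonde]
    refine mul_ne_zero (Finset.prod_ne_zero_iff.mpr fun i _ => hvne i) ?_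
    refine Finset.prod_ne_zero_iff.mpr fun i _ => Finset.prod_ne_zero_iff.mpr fun j hj => ?_
    exact sub_ne_zero.mpr fun hvij => (Finset.mem_Ioi.mp hj).ne' (hvinj hvij)
  have hmv : C.mulVec (fun _ => 1) = 0 := by
    funext i
    have : ∑ j, v j ^ (i.1 + 1) = ∑ γ ∈ T, γ ^ (i.1 + 1) := by
      rw [← Finset.sum_attach T (fun γ => γ ^ (i.1 + 1))]
      exact Fintype.sum_equiv e _ _ (fun j => rfl)
    simp only [Matrix.mulVec, dotProduct, mul_one, hC, Matrix.of_apply]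
    rw [this, Pi.zero_apply]
    exact h (i.1 + 1) i.1.succ_pos (by omega)
  have := Matrix.eq_zero_of_mulVec_eq_zero hdet hmv
  have hw0 : 0 < w := hw ▸ Finset.card_pos.mpr hTne
  have := congrFun this ⟨0, hw0⟩
  simp at this
end
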